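/- arXiv:2404.07630 — 5 statements merged into one kernel-verified Lean document; each statement's English description precedes it below -/
import Mathlib

section
/- Let g : ℝ → ℝ be a continuous, everywhere positive probability density with CDF G(x) = ∫_{−∞}^{x} g(t) dt, ∫_ℝ g = 1, and mean μ₀ = ∫_ℝ x·g(x) dx. Let β ∈ (0,1), q ∈ (0,1), and s ∈ ℝ. Define x̲(v) = 2s/(1+q) − ((1−q)/(1+q))·v and R(v) = β·∫_{x̲(v)}^{v} (G(x) − G(x̲(v))) dx − (1−β)·(μ₀ − v). Then R is strictly increasing on [s, +∞). -/
/-!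
Write `R v = β · A (x̲ v) v + (1 - β) · v - (1 - β) · μ₀` with `A a v = ∫ x in a..v, (G x - G a)`.
Since `G` is monotone, `A a v` grows when the interval `[a, v]` grows. On `[s, ∞)` the interval
`[x̲ v, v]` is nonempty and grows with `v`, because `x̲` is antitone; so the first term is monotone
and the strictly increasing term `(1 - β) · v` makes `R` strictly increasing.
-/

open MeasureTheory Set

theorem monotone_setIntegral_Iic {g : ℝ → ℝ} (hg : Integrable g) (hg_nonneg : 0 ≤ g) :
    Monotone fun x => ∫ t in Iic x, g t := fun _ _ hab =>
  setIntegral_mono_set hg.integrableOn (Filter.Eventually.of_forall hg_nonneg)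
    (Iic_subset_Iic.mpr hab).eventuallyLE

theorem Monotone.intervalIntegral_sub_left_mono {G : ℝ → ℝ} (hG : Monotone G)
    {a₁ a₂ v₁ v₂ : ℝ} (ha : a₂ ≤ a₁) (hav : a₁ ≤ v₁) (hv : v₁ ≤ v₂) :
    ∫ x in a₁..v₁, (G x - G a₁) ≤ ∫ x in a₂..v₂, (G x - G a₂) := by
  have hIntegrable : ∀ c a b, IntervalIntegrable (fun x => G x - G c) volume a b := fun c _ _ =>
    (MonotoneOn.intervalIntegrable fun _ _ _ _ hxy => sub_le_sub_right (hG hxy) (G c))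
  calc ∫ x in a₁..v₁, (G x - G a₁)
      ≤ ∫ x in a₁..v₁, (G x - G a₂) :=
        intervalIntegral.integral_mono_on hav (hIntegrable _ _ _) (hIntegrable _ _ _) fun _ _ => by
          linarith [hG ha]
    _ ≤ ∫ x in a₂..v₂, (G x - G a₂) := by
        refine intervalIntegral.integral_mono_interval ha hav hv ?_ (hIntegrable _ _ _)
        filter_upwards [ae_restrict_mem measurableSet_Ioc] with x hx
        exact sub_nonneg.mpr (hG hx.1.le)

theorem stmt_8_general (g : ℝ → ℝ) (hg_pos : ∀ x, 0 < g x)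
    (hg_one : (∫ x, g x) = 1)
    (μ₀ : ℝ)
    (G : ℝ → ℝ) (hG : ∀ x, G x = ∫ t in Iic x, g t)
    (β : ℝ) (hβ : β ∈ Set.Ioo (0 : ℝ) 1)
    (q : ℝ) (hq : q ∈ Set.Ioo (0 : ℝ) 1)
    (s : ℝ)
    (xlow : ℝ → ℝ) (hxlow : ∀ v, xlow v = 2 * s / (1 + q) - ((1 - q) / (1 + q)) * v)
    (R : ℝ → ℝ)
    (hR : ∀ v, R v = β * (∫ x in (xlow v)..v, (G x - G (xlow v))) - (1 - β) * (μ₀ - v)) :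
    StrictMonoOn R (Set.Ici s) := by
  obtain ⟨hβ0, hβ1⟩ := hβ
  obtain ⟨hq0, hq1⟩ := hq
  have hg_int : Integrable g := Integrable.of_integral_ne_zero (by simp [hg_one])
  have hG_mono : Monotone G := by
    rw [show G = _ from funext hG]
    exact monotone_setIntegral_Iic hg_int fun x => (hg_pos x).le
  have hxlow_le_self : ∀ v, s ≤ v → xlow v ≤ v := fun v hv => by
    rw [hxlow, div_mul_eq_mul_div, ← sub_div, div_le_iff₀ (by linarith)]
    nlinarith
  intro v₁ hv₁ v₂ _ hv
  have hxlow_anti : xlow v₂ ≤ xlow v₁ := by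
    rw [hxlow, hxlow]
    gcongr
  have harea := hG_mono.intervalIntegral_sub_left_mono hxlow_anti (hxlow_le_self v₁ hv₁) hv.le
  rw [hR, hR]
  nlinarith [mul_le_mul_of_nonneg_left harea hβ0.le]

/-- The equilibrium-determining function `R` for the case `r > r₀` (with `s = r₀μ₀/r`) is
strictly increasing on `[s, +∞)`. -/
theorem stmt_8 (g : ℝ → ℝ) (hg_cont : Continuous g) (hg_pos : ∀ x, 0 < g x)
    (hg_one : (∫ x, g x) = 1)
    (hxg_int : Integrable (fun x => x * g x))
    (μ₀ : ℝ) (hμ₀ : μ₀ = ∫ x, x * g x)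
    (G : ℝ → ℝ) (hG : ∀ x, G x = ∫ t in Iic x, g t)
    (β : ℝ) (hβ : β ∈ Set.Ioo (0 : ℝ) 1)
    (q : ℝ) (hq : q ∈ Set.Ioo (0 : ℝ) 1)
    (s : ℝ)
    (xlow : ℝ → ℝ) (hxlow : ∀ v, xlow v = 2 * s / (1 + q) - ((1 - q) / (1 + q)) * v)
    (R : ℝ → ℝ)
    (hR : ∀ v, R v = β * (∫ x in (xlow v)..v, (G x - G (xlow v))) - (1 - β) * (μ₀ - v)) :
    StrictMonoOn R (Set.Ici s) :=
  stmt_8_general g hg_pos hg_one μ₀ G hG β hβ q hq s xlow hxlow R hR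
end

section
/- Let g : ℝ → ℝ be a continuous, everywhere positive probability density with CDF G(x) = ∫_{−∞}^{x} g(t) dt, ∫_ℝ g = 1, mean μ₀ = ∫_ℝ x·g(x) dx, and μ₀ > 0. Let β ∈ (0,1), q ∈ (0,1), and let r > r₀ > 0, so that s := r₀μ₀/r < μ₀. Define x̲(v) = 2s/(1+q) − ((1−q)/(1+q))·v and R(v) = β·∫_{x̲(v)}^{v} (G(x) − G(x̲(v))) dx − (1−β)·(μ₀ − v). Then R has exactly one zero x̄ in [s, +∞), this zero satisfies s < x̄ < μ₀, and the corresponding lower threshold x̲ := x̲(x̄) satisfies x̲ < s. In particular x̲ < s < x̄. -/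
/-!
For `v ≥ s` the lower threshold `x̲(v)` lies below `s ≤ v` and decreases as `v` increases, so
the interval `[x̲(v), v]` widens while the nonnegative integrand `G x - G (x̲(v))` grows
pointwise: the integral term of `R` is monotone and `R` is strictly increasing on `[s, ∞)`.
Since `R s = -(1 - β)(μ₀ - s) < 0 < R μ₀`, the intermediate value theorem gives the unique zero
`x̄ ∈ (s, μ₀)`, and `x̲(x̄) < x̲(s) = s`.
-/

open MeasureTheory Set

theorem integral_Iic_eq_add_intervalIntegral {g : ℝ → ℝ} (hg : Integrable g) (x : ℝ) :
    ∫ t in Iic x, g t = (∫ t in Iic 0, g t) + ∫ t in 0..x, g t := by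
  rw [← intervalIntegral.integral_Iic_sub_Iic hg.integrableOn hg.integrableOn]
  ring

theorem continuous_integral_Iic {g : ℝ → ℝ} (hg : Integrable g) :
    Continuous fun x ↦ ∫ t in Iic x, g t := by
  rw [funext (integral_Iic_eq_add_intervalIntegral hg)]
  exact continuous_const.add
    (intervalIntegral.continuous_primitive (fun _ _ ↦ hg.intervalIntegrable) 0)

theorem strictMono_integral_Iic {g : ℝ → ℝ} (hg : Integrable g) (hpos : ∀ x, 0 < g x) :
    StrictMono fun x ↦ ∫ t in Iic x, g t := by
  intro x y hxy
  have := intervalIntegral.intervalIntegral_pos_of_pos hg.intervalIntegrable hpos hxy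
  rw [← intervalIntegral.integral_Iic_sub_Iic hg.integrableOn hg.integrableOn] at this
  simpa using this

noncomputable def gapIntegral (G : ℝ → ℝ) (a v : ℝ) : ℝ :=
  ∫ x in a..v, (G x - G a)

theorem gapIntegral_self (G : ℝ → ℝ) (a : ℝ) : gapIntegral G a a = 0 :=
  intervalIntegral.integral_same

theorem gapIntegral_pos {G : ℝ → ℝ} (hG : StrictMono G) {a v : ℝ} (hav : a < v) :
    0 < gapIntegral G a v :=
  intervalIntegral.intervalIntegral_pos_of_pos_on
    ((hG.monotone.intervalIntegrable).sub intervalIntegrable_const)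
    (fun _ hx ↦ sub_pos.mpr (hG hx.1)) hav

theorem gapIntegral_mono {G : ℝ → ℝ} (hG : Monotone G) {a a' v v' : ℝ}
    (ha : a' ≤ a) (hav : a ≤ v) (hv : v ≤ v') :
    gapIntegral G a v ≤ gapIntegral G a' v' :=
  calc gapIntegral G a v
      ≤ ∫ x in a..v, (G x - G a') :=
        intervalIntegral.integral_mono_on hav
          (hG.intervalIntegrable.sub intervalIntegrable_const)
          (hG.intervalIntegrable.sub intervalIntegrable_const)
          (fun _ _ ↦ by linarith [hG ha])
    _ ≤ gapIntegral G a' v' :=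
        intervalIntegral.integral_mono_interval ha hav hv
          (ae_restrict_of_forall_mem measurableSet_Ioc fun x hx ↦ sub_nonneg.mpr (hG hx.1.le))
          (hG.intervalIntegrable.sub intervalIntegrable_const)

theorem Continuous.gapIntegral {G a v : ℝ → ℝ} (hG : Continuous G) (ha : Continuous a)
    (hv : Continuous v) : Continuous fun t ↦ gapIntegral G (a t) (v t) := by
  have hint : ∀ t b c, IntervalIntegrable (fun x ↦ G x - G (a t)) volume b c := fun t b c ↦
    (hG.sub continuous_const).intervalIntegrable b c
  have split : ∀ t, _root_.gapIntegral G (a t) (v t) =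
      (∫ x in 0..v t, (G x - G (a t))) - ∫ x in 0..a t, (G x - G (a t)) := fun t ↦
    (intervalIntegral.integral_interval_sub_left (hint _ 0 _) (hint _ 0 _)).symm
  simp only [split]
  fun_prop

theorem strictMonoOn_gapIntegral_sub {G a : ℝ → ℝ} (hG : Monotone G) (ha : Antitone a)
    {s β μ : ℝ} (has : a s = s) (hβ0 : 0 ≤ β) (hβ1 : β < 1) :
    StrictMonoOn (fun v ↦ β * gapIntegral G (a v) v - (1 - β) * (μ - v)) (Ici s) := by
  intro v hv w _ hvw
  have hav : a v ≤ v := (has ▸ ha hv).trans hv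
  have hgap := mul_le_mul_of_nonneg_left (gapIntegral_mono hG (ha hvw.le) hav hvw.le) hβ0
  have hlin : (1 - β) * (μ - w) < (1 - β) * (μ - v) := by gcongr
  simp only
  linarith

theorem exists_unique_zero_of_strictMonoOn_Ici {f : ℝ → ℝ} {a b : ℝ} (hab : a ≤ b)
    (hf : ContinuousOn f (Icc a b)) (hmono : StrictMonoOn f (Ici a)) (ha : f a < 0)
    (hb : 0 < f b) : ∃ x ∈ Ioo a b, f x = 0 ∧ ∀ y ∈ Ici a, f y = 0 → y = x := by
  obtain ⟨x, hx, hx0⟩ := intermediate_value_Ioo hab hf ⟨ha, hb⟩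
  exact ⟨x, hx, hx0, fun y hy hy0 ↦
    hmono.injOn hy (mem_Ici.mpr hx.1.le) (hy0.trans hx0.symm)⟩

theorem exists_unique_zero_gapIntegral_sub {G a : ℝ → ℝ} (hG : StrictMono G)
    (hGc : Continuous G) (ha : StrictAnti a) (hac : Continuous a) {s β μ : ℝ} (has : a s = s)
    (hsμ : s < μ) (hβ0 : 0 < β) (hβ1 : β < 1) :
    ∃ x ∈ Ioo s μ, β * gapIntegral G (a x) x - (1 - β) * (μ - x) = 0 ∧
      ∀ y ∈ Ici s, β * gapIntegral G (a y) y - (1 - β) * (μ - y) = 0 → y = x := by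
  refine exists_unique_zero_of_strictMonoOn_Ici hsμ.le ?_
    (strictMonoOn_gapIntegral_sub hG.monotone ha.antitone has hβ0.le hβ1) ?_ ?_
  · exact ((hGc.gapIntegral hac continuous_id).const_mul β).sub (by fun_prop) |>.continuousOn
  · simp only [has, gapIntegral_self]
    nlinarith
  · have := gapIntegral_pos hG ((ha hsμ).trans (has ▸ hsμ))
    nlinarith

theorem stmt_9_general (g : ℝ → ℝ) (hg_pos : ∀ x, 0 < g x)
    (hg_one : (∫ x, g x) = 1)
    (μ₀ : ℝ) (hμ₀pos : 0 < μ₀)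
    (G : ℝ → ℝ) (hG : ∀ x, G x = ∫ t in Iic x, g t)
    (β : ℝ) (hβ : β ∈ Set.Ioo (0 : ℝ) 1)
    (q : ℝ) (hq : q ∈ Set.Ioo (0 : ℝ) 1)
    (r r₀ : ℝ) (hr₀ : 0 < r₀) (hrr₀ : r₀ < r)
    (s : ℝ) (hs : s = r₀ * μ₀ / r)
    (xlow : ℝ → ℝ) (hxlow : ∀ v, xlow v = 2 * s / (1 + q) - ((1 - q) / (1 + q)) * v)
    (R : ℝ → ℝ)
    (hR : ∀ v, R v = β * (∫ x in (xlow v)..v, (G x - G (xlow v))) - (1 - β) * (μ₀ - v)) :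
    ∃ xu, (xu ∈ Set.Ici s ∧ R xu = 0) ∧
      (∀ y ∈ Set.Ici s, R y = 0 → y = xu) ∧
      s < xu ∧ xu < μ₀ ∧ xlow xu < s := by
  obtain ⟨hβ0, hβ1⟩ := hβ
  obtain ⟨hq0, hq1⟩ := hq
  have hg_int : Integrable g := .of_integral_ne_zero (hg_one ▸ one_ne_zero)
  have hG_eq : G = fun x ↦ ∫ t in Iic x, g t := funext hG
  have hsμ : s < μ₀ := by
    rw [hs, div_lt_iff₀ (by linarith)]
    nlinarith
  have hxlow_anti : StrictAnti xlow := fun v w hvw ↦ by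
    have : 0 < (1 - q) / (1 + q) := div_pos (by linarith) (by linarith)
    rw [hxlow, hxlow]
    gcongr
  have hxlow_s : xlow s = s := by
    rw [hxlow]
    field_simp
    ring
  obtain ⟨xu, ⟨hs_xu, hxu_μ⟩, hxu0, huniq⟩ := exists_unique_zero_gapIntegral_sub
    (hG_eq ▸ strictMono_integral_Iic hg_int hg_pos) (hG_eq ▸ continuous_integral_Iic hg_int)
    hxlow_anti (funext hxlow ▸ by fun_prop) hxlow_s hsμ hβ0 hβ1
  have hR_gap : ∀ v, R v = β * gapIntegral G (xlow v) v - (1 - β) * (μ₀ - v) := hR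
  simp only [← hR_gap] at hxu0 huniq
  exact ⟨xu, ⟨hs_xu.le, hxu0⟩, huniq, hs_xu, hxu_μ, hxlow_s ▸ hxlow_anti hs_xu⟩

/-- Existence and uniqueness of the equilibrium thresholds when `r > r₀` (Proposition 2):
`R` has a unique zero `x̄` in `[s, +∞)`, it satisfies `s < x̄ < μ₀`, and the corresponding
lower threshold `x̲ = x̲(x̄)` satisfies `x̲ < s`; so the withholding interval straddles
`s = r₀μ₀/r` (Corollary 1). -/
theorem stmt_9 (g : ℝ → ℝ) (hg_cont : Continuous g) (hg_pos : ∀ x, 0 < g x)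
    (hg_one : (∫ x, g x) = 1)
    (hxg_int : Integrable (fun x => x * g x))
    (μ₀ : ℝ) (hμ₀ : μ₀ = ∫ x, x * g x) (hμ₀pos : 0 < μ₀)
    (G : ℝ → ℝ) (hG : ∀ x, G x = ∫ t in Iic x, g t)
    (β : ℝ) (hβ : β ∈ Set.Ioo (0 : ℝ) 1)
    (q : ℝ) (hq : q ∈ Set.Ioo (0 : ℝ) 1)
    (r r₀ : ℝ) (hr₀ : 0 < r₀) (hrr₀ : r₀ < r)
    (s : ℝ) (hs : s = r₀ * μ₀ / r)
    (xlow : ℝ → ℝ) (hxlow : ∀ v, xlow v = 2 * s / (1 + q) - ((1 - q) / (1 + q)) * v)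
    (R : ℝ → ℝ)
    (hR : ∀ v, R v = β * (∫ x in (xlow v)..v, (G x - G (xlow v))) - (1 - β) * (μ₀ - v)) :
    ∃ xu, (xu ∈ Set.Ici s ∧ R xu = 0) ∧
      (∀ y ∈ Set.Ici s, R y = 0 → y = xu) ∧
      s < xu ∧ xu < μ₀ ∧ xlow xu < s :=
  stmt_9_general g hg_pos hg_one μ₀ hμ₀pos G hG β hβ q hq r r₀ hr₀ hrr₀ s hs xlow hxlow R hR
end

section
/- Let g : ℝ → ℝ be a continuous, everywhere positive probability density with CDF G(x) = ∫_{−∞}^{x} g(t) dt, ∫_ℝ g = 1, mean μ₀ = ∫_ℝ x·g(x) dx, and μ₀ > 0. Let β ∈ (0,1), p ∈ (0,1), and s ∈ ℝ, and assume (p/(1−p))·∫_{−∞}^{s} G(x) dx + s − μ₀ > 0 (the improper integral being finite because g has a finite mean). Define x̄_p(u) = (2s − (1−p)·u)/(1+p) and H(u) = (β/(1−β))·∫_{u}^{x̄_p(u)} (G(x) − G(x̄_p(u))) dx + (p/(1−p))·∫_{−∞}^{u} G(x) dx − (μ₀ − u). Then H is strictly increasing on (−∞, s], H(s) > 0, H(u)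 → −∞ as u → −∞, and H has a unique zero x̲_p in (−∞, s). -/
/-!
Write the first term of `H` as `-(β / (1 - β)) ∫_u^{x̄(u)} (G(x̄(u)) - G(x)) dx`. Its integrand is
nonnegative because `G` is monotone, and as `u` increases towards `s = x̄(s)` the interval
`[u, x̄(u)]` shrinks while `G(x̄(u))` decreases (`x̄` is decreasing). So this term is nondecreasing
on `(-∞, s]`, as is `∫_{-∞}^u G`, and the summand `u` makes `H` strictly increasing. The same
bounds give `H(u) ≤ u + const`, hence `H → -∞`; at `s` the first term vanishes and `H(s)` is the
assumed positive quantity. `H` is continuous, so the intermediate value theorem gives the zero.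
-/

open MeasureTheory Set Filter

theorem monotone_setIntegral_Iic_s14 {f : ℝ → ℝ} (hf : ∀ x, 0 ≤ f x)
    (hfi : ∀ a, IntegrableOn f (Iic a)) : Monotone fun x => ∫ t in Iic x, f t :=
  fun _ y hxy => setIntegral_mono_set (hfi y) (.of_forall hf) (Iic_subset_Iic.mpr hxy).eventuallyLE

theorem continuous_setIntegral_Iic {f : ℝ → ℝ} (hfi : ∀ a, IntegrableOn f (Iic a)) :
    Continuous fun x => ∫ t in Iic x, f t := by
  have hfii (a b : ℝ) : IntervalIntegrable f volume a b :=
    intervalIntegrable_iff.mpr ((hfi (max a b)).mono_set Ioc_subset_Iic_self)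
  have h (x : ℝ) : ∫ t in Iic x, f t = (∫ t in Iic 0, f t) + ∫ t in 0..x, f t := by
    rw [← intervalIntegral.integral_Iic_sub_Iic (hfi 0) (hfi x)]; ring
  rw [funext h]
  exact continuous_const.add (intervalIntegral.continuous_primitive hfii 0)

theorem continuous_integral_sub_apply_upper {G φ : ℝ → ℝ} (hG : Continuous G)
    (hφ : Continuous φ) : Continuous fun u => ∫ x in u..φ u, (G x - G (φ u)) := by
  have h (u : ℝ) : ∫ x in u..φ u, (G x - G (φ u)) =
      (∫ x in 0..φ u, (G x - G (φ u))) - ∫ x in 0..u, (G x - G (φ u)) :=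
    (intervalIntegral.integral_interval_sub_left ((hG.sub continuous_const).intervalIntegrable _ _)
      ((hG.sub continuous_const).intervalIntegrable _ _)).symm
  rw [funext h]
  fun_prop

theorem integral_sub_mono_of_monotone {G : ℝ → ℝ} (hG : Monotone G) {a a' b b' : ℝ}
    (ha : a' ≤ a) (hab : a ≤ b) (hb : b ≤ b') :
    ∫ x in a..b, (G b - G x) ≤ ∫ x in a'..b', (G b' - G x) := calc
  ∫ x in a..b, (G b - G x) ≤ ∫ x in a..b, (G b' - G x) :=
    intervalIntegral.integral_mono_on hab (intervalIntegrable_const.sub hG.intervalIntegrable)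
      (intervalIntegrable_const.sub hG.intervalIntegrable) fun x _ => by linarith [hG hb]
  _ ≤ ∫ x in a'..b', (G b' - G x) :=
    intervalIntegral.integral_mono_interval ha hab hb
      ((ae_restrict_mem measurableSet_Ioc).mono fun x hx => sub_nonneg.mpr (hG hx.2))
      (intervalIntegrable_const.sub hG.intervalIntegrable)

theorem existsUnique_zero_Iio_of_strictMonoOn {f : ℝ → ℝ} {s : ℝ}
    (hmono : StrictMonoOn f (Iic s)) (hcont : ContinuousOn f (Iic s)) (hs : 0 < f s)
    (hbot : Tendsto f atBot atBot) : ∃! u, u ∈ Iio s ∧ f u = 0 := by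
  obtain ⟨a, hfa, has⟩ := ((hbot.eventually_lt_atBot 0).and (eventually_le_atBot s)).exists
  obtain ⟨u, hu, hfu⟩ :=
    intermediate_value_Icc has (hcont.mono Icc_subset_Iic_self) ⟨hfa.le, hs.le⟩
  have hus : u < s := hu.2.lt_of_ne (by rintro rfl; linarith)
  exact ⟨u, ⟨hus, hfu⟩, fun v ⟨hvs, hfv⟩ =>
    hmono.injOn (mem_Iic.mpr hvs.le) (mem_Iic.mpr hus.le) (hfv.trans hfu.symm)⟩

/-- The paper's `H`, with `c₁ = β / (1 - β)`, `c₂ = p / (1 - p)` and `φ = x̄_p`. -/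
noncomputable def lowerThresholdFn (G φ : ℝ → ℝ) (c₁ c₂ μ₀ u : ℝ) : ℝ :=
  c₁ * (∫ x in u..φ u, (G x - G (φ u))) + c₂ * (∫ x in Iic u, G x) - (μ₀ - u)

section LowerThresholdFn

variable {G φ : ℝ → ℝ} {c₁ c₂ μ₀ s : ℝ}

theorem lowerThresholdFn_eq_of_apply_eq_self (hφs : φ s = s) :
    lowerThresholdFn G φ c₁ c₂ μ₀ s = c₂ * (∫ x in Iic s, G x) - (μ₀ - s) := by
  simp [lowerThresholdFn, hφs]

theorem Antitone.self_le_apply_of_le (hφ : Antitone φ) (hφs : φ s = s) {u : ℝ} (hu : u ≤ s) :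
    u ≤ φ u :=
  hu.trans (hφs ▸ hφ hu)

theorem continuous_lowerThresholdFn (hGc : Continuous G) (hGi : ∀ a, IntegrableOn G (Iic a))
    (hφc : Continuous φ) : Continuous (lowerThresholdFn G φ c₁ c₂ μ₀) :=
  ((continuous_const.mul (continuous_integral_sub_apply_upper hGc hφc)).add
    (continuous_const.mul (continuous_setIntegral_Iic hGi))).sub
    (continuous_const.sub continuous_id)

theorem strictMonoOn_lowerThresholdFn (hG : Monotone G) (hG₀ : ∀ x, 0 ≤ G x)
    (hGi : ∀ a, IntegrableOn G (Iic a)) (hφ : Antitone φ) (hφs : φ s = s) (hc₁ : 0 ≤ c₁)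
    (hc₂ : 0 ≤ c₂) : StrictMonoOn (lowerThresholdFn G φ c₁ c₂ μ₀) (Iic s) := by
  intro u hu v hv huv
  have hgap : ∫ x in v..φ v, (G (φ v) - G x) ≤ ∫ x in u..φ u, (G (φ u) - G x) :=
    integral_sub_mono_of_monotone hG huv.le (hφ.self_le_apply_of_le hφs hv) (hφ huv.le)
  have hint : ∫ x in Iic u, G x ≤ ∫ x in Iic v, G x := monotone_setIntegral_Iic_s14 hG₀ hGi huv.le
  simp only [lowerThresholdFn, ← neg_sub (G (φ _)), intervalIntegral.integral_neg]
  nlinarith [mul_le_mul_of_nonneg_left hgap hc₁, mul_le_mul_of_nonneg_left hint hc₂]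

theorem tendsto_lowerThresholdFn_atBot (hG : Monotone G) (hG₀ : ∀ x, 0 ≤ G x)
    (hGi : ∀ a, IntegrableOn G (Iic a)) (hφ : Antitone φ) (hφs : φ s = s) (hc₁ : 0 ≤ c₁)
    (hc₂ : 0 ≤ c₂) : Tendsto (lowerThresholdFn G φ c₁ c₂ μ₀) atBot atBot := by
  refine tendsto_atBot_mono' atBot ?_
    (tendsto_atBot_add_const_right _ (c₂ * (∫ x in Iic s, G x) - μ₀) tendsto_id)
  filter_upwards [eventually_le_atBot s] with u hu
  have hgap : 0 ≤ ∫ x in u..φ u, (G (φ u) - G x) := by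
    simpa using integral_sub_mono_of_monotone hG (hφ.self_le_apply_of_le hφs hu) le_rfl le_rfl
  have hint : ∫ x in Iic u, G x ≤ ∫ x in Iic s, G x := monotone_setIntegral_Iic_s14 hG₀ hGi hu
  simp only [lowerThresholdFn, ← neg_sub (G (φ _)), intervalIntegral.integral_neg, id]
  nlinarith [mul_nonneg hc₁ hgap, mul_le_mul_of_nonneg_left hint hc₂]

end LowerThresholdFn

theorem stmt_14_general (g : ℝ → ℝ) (hg_pos : ∀ x, 0 < g x)
    (hg_one : (∫ x, g x) = 1)
    (μ₀ : ℝ)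
    (G : ℝ → ℝ) (hG : ∀ x, G x = ∫ t in Iic x, g t)
    (hGint : ∀ a : ℝ, IntegrableOn G (Set.Iic a))
    (β : ℝ) (hβ : β ∈ Set.Ioo (0 : ℝ) 1)
    (p : ℝ) (hp : p ∈ Set.Ioo (0 : ℝ) 1)
    (s : ℝ)
    (hV : p / (1 - p) * (∫ x in Set.Iic s, G x) + s - μ₀ > 0)
    (xbarp : ℝ → ℝ) (hxbarp : ∀ u, xbarp u = (2 * s - (1 - p) * u) / (1 + p))
    (H : ℝ → ℝ)
    (hH : ∀ u, H u = β / (1 - β) * (∫ x in u..(xbarp u), (G x - G (xbarp u)))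
      + p / (1 - p) * (∫ x in Set.Iic u, G x) - (μ₀ - u)) :
    StrictMonoOn H (Set.Iic s) ∧ 0 < H s ∧ Tendsto H atBot atBot ∧
      ∃! u, u ∈ Set.Iio s ∧ H u = 0 := by
  obtain ⟨hβ₀, hβ₁⟩ := hβ
  obtain ⟨hp₀, hp₁⟩ := hp
  have hc₁ : 0 ≤ β / (1 - β) := div_nonneg hβ₀.le (by linarith)
  have hc₂ : 0 ≤ p / (1 - p) := div_nonneg hp₀.le (by linarith)
  obtain rfl : H = lowerThresholdFn G xbarp (β / (1 - β)) (p / (1 - p)) μ₀ := funext hH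
  have hgi : ∀ a, IntegrableOn g (Iic a) := fun _ =>
    (Integrable.of_integral_ne_zero (hg_one ▸ one_ne_zero)).integrableOn
  have hG_mono : Monotone G := funext hG ▸ monotone_setIntegral_Iic_s14 (fun x => (hg_pos x).le) hgi
  have hG_cont : Continuous G := funext hG ▸ continuous_setIntegral_Iic hgi
  have hG₀ (x : ℝ) : 0 ≤ G x := hG x ▸ setIntegral_nonneg measurableSet_Iic fun t _ => (hg_pos t).le
  have hφ : Antitone xbarp := fun u v huv => by
    rw [hxbarp, hxbarp]; gcongr
  have hφc : Continuous xbarp := funext hxbarp ▸ by fun_prop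
  have hφs : xbarp s = s := by rw [hxbarp]; field_simp; ring
  have hmono := strictMonoOn_lowerThresholdFn (μ₀ := μ₀) hG_mono hG₀ hGint hφ hφs hc₁ hc₂
  have hpos : 0 < lowerThresholdFn G xbarp (β / (1 - β)) (p / (1 - p)) μ₀ s := by
    rw [lowerThresholdFn_eq_of_apply_eq_self hφs]; linarith
  have hbot := tendsto_lowerThresholdFn_atBot (μ₀ := μ₀) hG_mono hG₀ hGint hφ hφs hc₁ hc₂
  exact ⟨hmono, hpos, hbot, existsUnique_zero_Iio_of_strictMonoOn hmono
    (continuous_lowerThresholdFn hG_cont hGint hφc).continuousOn hpos hbot⟩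

/-- Extension with the firm's endogenous response (Proposition 6, case `r < r̄`): the
equilibrium-determining function `H` is strictly increasing on `(−∞, s]`, positive at `s`,
tends to `−∞` at `−∞`, and has a unique zero `x̲_p` in `(−∞, s)`. -/
theorem stmt_14 (g : ℝ → ℝ) (hg_cont : Continuous g) (hg_pos : ∀ x, 0 < g x)
    (hg_one : (∫ x, g x) = 1)
    (hxg_int : Integrable (fun x => x * g x))
    (μ₀ : ℝ) (hμ₀ : μ₀ = ∫ x, x * g x) (hμ₀pos : 0 < μ₀)
    (G : ℝ → ℝ) (hG : ∀ x, G x = ∫ t in Iic x, g t)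
    (hGint : ∀ a : ℝ, IntegrableOn G (Set.Iic a))
    (β : ℝ) (hβ : β ∈ Set.Ioo (0 : ℝ) 1)
    (p : ℝ) (hp : p ∈ Set.Ioo (0 : ℝ) 1)
    (s : ℝ)
    (hV : p / (1 - p) * (∫ x in Set.Iic s, G x) + s - μ₀ > 0)
    (xbarp : ℝ → ℝ) (hxbarp : ∀ u, xbarp u = (2 * s - (1 - p) * u) / (1 + p))
    (H : ℝ → ℝ)
    (hH : ∀ u, H u = β / (1 - β) * (∫ x in u..(xbarp u), (G x - G (xbarp u)))
      + p / (1 - p) * (∫ x in Set.Iic u, G x) - (μ₀ - u)) :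
    StrictMonoOn H (Set.Iic s) ∧ 0 < H s ∧ Tendsto H atBot atBot ∧
      ∃! u, u ∈ Set.Iio s ∧ H u = 0 :=
  stmt_14_general g hg_pos hg_one μ₀ G hG hGint β hβ p hp s hV xbarp hxbarp H hH
end

section
/- Let g : ℝ → ℝ be a continuous, everywhere positive probability density with CDF G(x) = ∫_{−∞}^{x} g(t) dt, ∫_ℝ g = 1, mean μ₀ = ∫_ℝ x·g(x) dx, and μ₀ > 0. Let p ∈ (0,1) and r₀ > 0. For r > 0 define V(r) = (p/(1−p))·∫_{−∞}^{r₀μ₀/r} G(x) dx − (μ₀ − r₀μ₀/r), where the improper integral is finite because g has a finite mean. Then: (i) V is strictly decreasing on (0, +∞); (ii) V(r₀) > 0; (iii) V(r) → (p/(1−p))·∫_{−∞}^{0} G(x) dx − μ₀ as r → +∞; and (iv) if (p/(1−p))·∫_{−∞}^{0} G(x) dx < μ₀, then there exists a unique r̄ > r₀ with V(r̄) = 0, and V(r) > 0 for r < r̄ while V(r) < 0 for r > r̄. -/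
/-!
Write `q = p/(1-p)` and `W c = q ∫_{-∞}^c G + c - μ₀`, so that `V r = W (r₀μ₀/r)`. Since `G > 0`,
`W` is continuous and strictly increasing, hence `V` is strictly decreasing on `(0, ∞)`;
`V r₀ = W μ₀ = q ∫_{-∞}^{μ₀} G > 0` and `V r → W 0`. When `W 0 < 0` the intermediate value
theorem gives the crossing point `r̄`, unique by strict monotonicity.
-/

open MeasureTheory Set Filter

section IntegralIic

variable {f : ℝ → ℝ}

theorem monotone_integral_Iic (hf : ∀ a, IntegrableOn f (Iic a)) (hf0 : ∀ x, 0 ≤ f x) :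
    Monotone fun c => ∫ x in Iic c, f x := fun _ b hab =>
  setIntegral_mono_set (hf b) (ae_of_all _ hf0) (Iic_subset_Iic.2 hab).eventuallyLE

theorem continuous_integral_Iic_s16 (hf : ∀ a, IntegrableOn f (Iic a)) :
    Continuous fun c => ∫ x in Iic c, f x := by
  have hprim : ∀ c, ∫ x in Iic c, f x = (∫ x in Iic 0, f x) + ∫ x in 0..c, f x := fun c => by
    rw [← intervalIntegral.integral_Iic_sub_Iic (hf 0) (hf c), add_sub_cancel]
  rw [show (fun c => ∫ x in Iic c, f x) = _ from funext hprim]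
  exact continuous_const.add <| intervalIntegral.continuous_primitive
    (fun a b => ((hf (max a b)).mono_set Icc_subset_Iic_self).intervalIntegrable) 0

theorem integral_Iic_pos {a : ℝ} (hf : IntegrableOn f (Iic a)) (hpos : ∀ x, 0 < f x) :
    0 < ∫ x in Iic a, f x := by
  refine (setIntegral_pos_iff_support_of_nonneg_ae (ae_of_all _ fun x => (hpos x).le) hf).2 ?_
  rw [inter_eq_right.2 fun x _ => Function.mem_support.2 (hpos x).ne', Real.volume_Iic]
  exact ENNReal.zero_lt_top

end IntegralIic

theorem StrictMono.strictAntiOn_comp_div {W : ℝ → ℝ} (hW : StrictMono W) {k : ℝ} (hk : 0 < k) :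
    StrictAntiOn (fun r => W (k / r)) (Ioi 0) := fun _ hr _ _ hrs =>
  hW (div_lt_div_of_pos_left hk hr hrs)

theorem Continuous.tendsto_comp_div_atTop {W : ℝ → ℝ} (hW : Continuous W) (k : ℝ) :
    Tendsto (fun r => W (k / r)) atTop (nhds (W 0)) :=
  hW.continuousAt.tendsto.comp (tendsto_const_nhds.div_atTop tendsto_id)

theorem StrictAntiOn.exists_zero_of_tendsto_neg {V : ℝ → ℝ} (hV : StrictAntiOn V (Ioi 0))
    (hVc : ContinuousOn V (Ioi 0)) {a L : ℝ} (ha : 0 < a) (hVa : 0 < V a)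
    (hL : Tendsto V atTop (nhds L)) (hL0 : L < 0) :
    ∃ rbar, (a < rbar ∧ V rbar = 0) ∧
      (∀ r, a < r → V r = 0 → r = rbar) ∧
      (∀ r, 0 < r → r < rbar → 0 < V r) ∧
      (∀ r, rbar < r → V r < 0) := by
  obtain ⟨R, hVR, haR⟩ := ((hL.eventually_lt_const hL0).and (eventually_gt_atTop a)).exists
  obtain ⟨rbar, ⟨harbar, -⟩, hVrbar⟩ := intermediate_value_Ioo' haR.le
    (hVc.mono fun x hx => ha.trans_le hx.1) (⟨hVR, hVa⟩ : (0 : ℝ) ∈ Ioo (V R) (V a))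
  have hrbar : rbar ∈ Ioi (0 : ℝ) := ha.trans harbar
  refine ⟨rbar, ⟨harbar, hVrbar⟩, fun r har hVr => ?_, fun r hr hrr => ?_, fun r hrr => ?_⟩
  · exact hV.injOn (mem_Ioi.2 (ha.trans har)) hrbar (hVr.trans hVrbar.symm)
  · exact hVrbar ▸ hV (mem_Ioi.2 hr) hrbar hrr
  · exact hVrbar ▸ hV hrbar (mem_Ioi.2 (mem_Ioi.1 hrbar |>.trans hrr)) hrr

theorem stmt_16_general (g : ℝ → ℝ) (hg_pos : ∀ x, 0 < g x)
    (hg_one : (∫ x, g x) = 1)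
    (μ₀ : ℝ) (hμ₀pos : 0 < μ₀)
    (G : ℝ → ℝ) (hG : ∀ x, G x = ∫ t in Iic x, g t)
    (hGint : ∀ a : ℝ, IntegrableOn G (Set.Iic a))
    (p : ℝ) (hp : p ∈ Set.Ioo (0 : ℝ) 1)
    (r₀ : ℝ) (hr₀ : 0 < r₀)
    (V : ℝ → ℝ)
    (hV : ∀ r, V r = p / (1 - p) * (∫ x in Set.Iic (r₀ * μ₀ / r), G x)
      - (μ₀ - r₀ * μ₀ / r)) :
    StrictAntiOn V (Set.Ioi (0 : ℝ)) ∧ 0 < V r₀ ∧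
      Tendsto V atTop (nhds (p / (1 - p) * (∫ x in Set.Iic (0 : ℝ), G x) - μ₀)) ∧
      (p / (1 - p) * (∫ x in Set.Iic (0 : ℝ), G x) < μ₀ →
        ∃ rbar, (r₀ < rbar ∧ V rbar = 0) ∧
          (∀ r, r₀ < r → V r = 0 → r = rbar) ∧
          (∀ r, 0 < r → r < rbar → 0 < V r) ∧
          (∀ r, rbar < r → V r < 0)) := by
  have hq : 0 < p / (1 - p) := div_pos hp.1 (sub_pos.2 hp.2)
  have hg : Integrable g := by
    by_contra h
    simp [integral_undef h] at hg_one
  have hG_pos : ∀ x, 0 < G x := fun x => hG x ▸ integral_Iic_pos hg.integrableOn hg_pos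
  set F := fun c => ∫ x in Iic c, G x
  set W := fun c => p / (1 - p) * F c + c - μ₀
  have hW_mono : StrictMono W := fun a b hab => by
    have := mul_le_mul_of_nonneg_left
      (monotone_integral_Iic hGint (fun x => (hG_pos x).le) hab.le) hq.le
    simp only [W]
    linarith
  have hW_cont : Continuous W :=
    ((continuous_const.mul (continuous_integral_Iic_s16 hGint)).add continuous_id).sub continuous_const
  have hVW : V = fun r => W (r₀ * μ₀ / r) := funext fun r => by
    simp only [hV, W, F]
    ring
  have hV_anti : StrictAntiOn V (Ioi 0) := hVW ▸ hW_mono.strictAntiOn_comp_div (by positivity)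
  have hV_r₀ : 0 < V r₀ := by
    simp only [hVW, W, mul_div_cancel_left₀ μ₀ hr₀.ne', add_sub_cancel_right]
    exact mul_pos hq (integral_Iic_pos (hGint μ₀) hG_pos)
  have hV_lim : Tendsto V atTop (nhds (p / (1 - p) * F 0 - μ₀)) := by
    simpa [hVW, W] using hW_cont.tendsto_comp_div_atTop (r₀ * μ₀)
  refine ⟨hV_anti, hV_r₀, hV_lim, fun hneg => ?_⟩
  have hV_cont : ContinuousOn V (Ioi 0) := hVW ▸
    hW_cont.comp_continuousOn (continuousOn_const.div continuousOn_id fun r hr => ne_of_gt hr)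
  exact hV_anti.exists_zero_of_tendsto_neg hV_cont hr₀ hV_r₀ hV_lim (sub_neg.2 hneg)

/-- Determination of the cutoff `r̄` in the extension with the firm's endogenous response
(Proposition 6, equation (barr)): `V` is strictly decreasing on `(0, ∞)`, positive at `r₀`,
tends to `(p/(1−p))·∫_{−∞}^{0} G − μ₀` as `r → ∞`, and when that limit is negative there is
a unique cutoff `r̄ > r₀` with `V(r̄) = 0`, `V > 0` below it and `V < 0` above it. -/
theorem stmt_16 (g : ℝ → ℝ) (hg_cont : Continuous g) (hg_pos : ∀ x, 0 < g x)
    (hg_one : (∫ x, g x) = 1)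
    (hxg_int : Integrable (fun x => x * g x))
    (μ₀ : ℝ) (hμ₀ : μ₀ = ∫ x, x * g x) (hμ₀pos : 0 < μ₀)
    (G : ℝ → ℝ) (hG : ∀ x, G x = ∫ t in Iic x, g t)
    (hGint : ∀ a : ℝ, IntegrableOn G (Set.Iic a))
    (p : ℝ) (hp : p ∈ Set.Ioo (0 : ℝ) 1)
    (r₀ : ℝ) (hr₀ : 0 < r₀)
    (V : ℝ → ℝ)
    (hV : ∀ r, V r = p / (1 - p) * (∫ x in Set.Iic (r₀ * μ₀ / r), G x)
      - (μ₀ - r₀ * μ₀ / r)) :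
    StrictAntiOn V (Set.Ioi (0 : ℝ)) ∧ 0 < V r₀ ∧
      Tendsto V atTop (nhds (p / (1 - p) * (∫ x in Set.Iic (0 : ℝ), G x) - μ₀)) ∧
      (p / (1 - p) * (∫ x in Set.Iic (0 : ℝ), G x) < μ₀ →
        ∃ rbar, (r₀ < rbar ∧ V rbar = 0) ∧
          (∀ r, r₀ < r → V r = 0 → r = rbar) ∧
          (∀ r, 0 < r → r < rbar → 0 < V r) ∧
          (∀ r, rbar < r → V r < 0)) :=
  stmt_16_general g hg_pos hg_one μ₀ hμ₀pos G hG hGint p hp r₀ hr₀ V hV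
end

section
/- Let g : ℝ → ℝ be a continuous, everywhere positive probability density with CDF G(x) = ∫_{−∞}^{x} g(t) dt, ∫_ℝ g = 1, mean μ₀ = ∫_ℝ x·g(x) dx, and μ₀ > 0. Let p ∈ (0,1) and s ∈ ℝ with (p/(1−p))·∫_{−∞}^{s} G(x) dx + s − μ₀ < 0. For β ∈ (0,1) let x̄_p(β) be the unique zero in (s, +∞) of T_β(v) = (β/((1−β)(1−p)))·∫_{2s−v}^{v} (G(x) − G(2s−v)) dx + (p/(1−p))·∫_{−∞}^{v} G(x) dx − (μ₀ − v), and let x̲_p(β) = 2s − x̄_p(β). Then for all β₁ < β₂ in (0,1): x̄_p(β₁) > x̄_p(β₂) and x̲_p(β₁) < x̲_p(β₂). -/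
/-!
Both thresholds move together since `x̲_p = 2s − x̄_p`, so only `x̄_p(β₂) < x̄_p(β₁)` needs proof.
On `[s, ∞)` each of `∫_{2s−v}^{v} (G − G(2s−v))`, `∫_{−∞}^{v} G` and `v − μ₀` is nondecreasing in `v`,
so `T_β` is monotone there; and since the first integral is positive for `v > s` while
`β ↦ β / ((1 − β)(1 − p))` is increasing, `T_{β₁} < T_{β₂}` on `(s, ∞)`. If `x̄_p(β₁) ≤ x̄_p(β₂)`, then
`0 = T_{β₁}(x̄_p(β₁)) ≤ T_{β₁}(x̄_p(β₂)) < T_{β₂}(x̄_p(β₂)) = 0`.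
-/

open MeasureTheory Set

theorem strictMono_setIntegral_Iic {g : ℝ → ℝ} (hg : Integrable g) (hpos : ∀ x, 0 < g x) :
    StrictMono fun x => ∫ t in Iic x, g t := by
  intro a b hab
  have hdiff := intervalIntegral.integral_Iic_sub_Iic (a := a) (b := b) hg.integrableOn hg.integrableOn
  have hpos_ab : 0 < ∫ t in a..b, g t :=
    intervalIntegral.intervalIntegral_pos_of_pos hg.intervalIntegrable hpos hab
  dsimp only
  linarith

theorem Monotone.intervalIntegral_sub_left_le {G : ℝ → ℝ} (hG : Monotone G) {μ : Measure ℝ}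
    [IsLocallyFiniteMeasure μ] {a b c d : ℝ} (hca : c ≤ a) (hab : a ≤ b) (hbd : b ≤ d) :
    ∫ x in a..b, (G x - G a) ∂μ ≤ ∫ x in c..d, (G x - G c) ∂μ := by
  have hint : ∀ a' b' e : ℝ, IntervalIntegrable (fun x => G x - e) μ a' b' := fun _ _ e =>
    hG.intervalIntegrable.sub intervalIntegrable_const
  calc ∫ x in a..b, (G x - G a) ∂μ ≤ ∫ x in a..b, (G x - G c) ∂μ :=
        intervalIntegral.integral_mono_on hab (hint _ _ _) (hint _ _ _)
          fun _ _ => by linarith [hG hca]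
    _ ≤ ∫ x in c..d, (G x - G c) ∂μ :=
        intervalIntegral.integral_mono_interval hca hab hbd
          ((ae_restrict_mem measurableSet_Ioc).mono fun _ hx => sub_nonneg.2 (hG hx.1.le))
          (hint _ _ _)

theorem StrictMono.intervalIntegral_sub_left_pos {G : ℝ → ℝ} (hG : StrictMono G) {a b : ℝ}
    (hab : a < b) : 0 < ∫ x in a..b, (G x - G a) :=
  intervalIntegral.intervalIntegral_pos_of_pos_on
    (hG.monotone.intervalIntegrable.sub intervalIntegrable_const)
    (fun _ hx => sub_pos.2 (hG hx.1)) hab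

theorem div_one_sub_mul_lt_div_one_sub_mul {β₁ β₂ k : ℝ} (hk : 0 < k)
    (hββ : β₁ < β₂) (hβ₂ : β₂ < 1) : β₁ / ((1 - β₁) * k) < β₂ / ((1 - β₂) * k) := by
  rw [div_lt_div_iff₀ (by nlinarith) (by nlinarith)]
  nlinarith

theorem stmt_18_general (g : ℝ → ℝ) (hg_pos : ∀ x, 0 < g x)
    (hg_one : (∫ x, g x) = 1)
    (μ₀ : ℝ)
    (G : ℝ → ℝ) (hG : ∀ x, G x = ∫ t in Iic x, g t)
    (hGint : ∀ a : ℝ, IntegrableOn G (Set.Iic a))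
    (p : ℝ) (hp : p ∈ Set.Ioo (0 : ℝ) 1)
    (s : ℝ)
    (T : ℝ → ℝ → ℝ)
    (hT : ∀ β v, T β v
      = β / ((1 - β) * (1 - p)) * (∫ x in (2 * s - v)..v, (G x - G (2 * s - v)))
        + p / (1 - p) * (∫ x in Set.Iic v, G x) - (μ₀ - v))
    (β₁ β₂ : ℝ) (hβ₁ : β₁ ∈ Set.Ioo (0 : ℝ) 1) (hβ₂ : β₂ ∈ Set.Ioo (0 : ℝ) 1)
    (hββ : β₁ < β₂)
    (xu₁ xu₂ : ℝ) (hxu₁ : xu₁ ∈ Set.Ioi s) (hxu₂ : xu₂ ∈ Set.Ioi s)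
    (hz₁ : T β₁ xu₁ = 0) (hz₂ : T β₂ xu₂ = 0) :
    xu₂ < xu₁ ∧ 2 * s - xu₁ < 2 * s - xu₂ := by
  obtain ⟨hp0, hp1⟩ := hp
  have hgint : Integrable g := Integrable.of_integral_ne_zero (by simp [hg_one])
  have hGstrict : StrictMono G := by
    simpa only [← funext hG] using strictMono_setIntegral_Iic hgint hg_pos
  have hGnonneg : ∀ x, 0 ≤ G x := fun x =>
    (hG x).symm ▸ setIntegral_nonneg measurableSet_Iic fun t _ => (hg_pos t).le
  have hT_mono : MonotoneOn (T β₁) (Ici s) := by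
    intro v hv w _ hvw
    rw [hT, hT]
    gcongr ?_ * ?_ + ?_ * ?_ - (μ₀ - ?_)
    · exact div_nonneg hβ₁.1.le (mul_nonneg (by linarith [hβ₁.2]) (by linarith))
    · refine hGstrict.monotone.intervalIntegral_sub_left_le ?_ ?_ hvw <;> linarith [mem_Ici.1 hv]
    · exact setIntegral_mono_set (hGint w) (.of_forall hGnonneg)
        (Iic_subset_Iic.2 hvw).eventuallyLE
  have hT_lt : T β₁ xu₂ < T β₂ xu₂ := by
    rw [hT, hT]
    gcongr ?_ + _ - _
    exact mul_lt_mul_of_pos_right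
      (div_one_sub_mul_lt_div_one_sub_mul (by linarith) hββ hβ₂.2)
      (hGstrict.intervalIntegral_sub_left_pos (by linarith [mem_Ioi.1 hxu₂]))
  have hxu : xu₂ < xu₁ := by
    by_contra! hle
    linarith [hT_mono (mem_Ici_of_Ioi hxu₁) (mem_Ici_of_Ioi hxu₂) hle]
  exact ⟨hxu, by linarith⟩

/-- Part 2 of Corollary 2 (extension, case `r > r̄`): the equilibrium thresholds satisfy
`∂x̄_p/∂β < 0` and `∂x̲_p/∂β > 0`, where `x̲_p = 2s − x̄_p`. -/
theorem stmt_18 (g : ℝ → ℝ) (hg_cont : Continuous g) (hg_pos : ∀ x, 0 < g x)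
    (hg_one : (∫ x, g x) = 1)
    (hxg_int : Integrable (fun x => x * g x))
    (μ₀ : ℝ) (hμ₀ : μ₀ = ∫ x, x * g x) (hμ₀pos : 0 < μ₀)
    (G : ℝ → ℝ) (hG : ∀ x, G x = ∫ t in Iic x, g t)
    (hGint : ∀ a : ℝ, IntegrableOn G (Set.Iic a))
    (p : ℝ) (hp : p ∈ Set.Ioo (0 : ℝ) 1)
    (s : ℝ)
    (hVneg : p / (1 - p) * (∫ x in Set.Iic s, G x) + s - μ₀ < 0)
    (T : ℝ → ℝ → ℝ)
    (hT : ∀ β v, T β v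
      = β / ((1 - β) * (1 - p)) * (∫ x in (2 * s - v)..v, (G x - G (2 * s - v)))
        + p / (1 - p) * (∫ x in Set.Iic v, G x) - (μ₀ - v))
    (β₁ β₂ : ℝ) (hβ₁ : β₁ ∈ Set.Ioo (0 : ℝ) 1) (hβ₂ : β₂ ∈ Set.Ioo (0 : ℝ) 1)
    (hββ : β₁ < β₂)
    (xu₁ xu₂ : ℝ) (hxu₁ : xu₁ ∈ Set.Ioi s) (hxu₂ : xu₂ ∈ Set.Ioi s)
    (hz₁ : T β₁ xu₁ = 0) (hz₂ : T β₂ xu₂ = 0) :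
    xu₂ < xu₁ ∧ 2 * s - xu₁ < 2 * s - xu₂ :=
  stmt_18_general g hg_pos hg_one μ₀ G hG hGint p hp s T hT β₁ β₂ hβ₁ hβ₂ hββ xu₁ xu₂ hxu₁ hxu₂ hz₁
    hz₂
end
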